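/- For every ordinal κ > 0 there exist a set Z, a collection 𝒴 of subsets of Z closed under arbitrary intersections, and a function μ : 𝒴 → 𝒫(Z) such that μ satisfies (μ⊆), (μPR), (μCum), and (μCumt α) holds for every ordinal α < κ, but (μCum κ) fails. -/

import Mathlib

/-!
The model lives over a well-order `T` with `⊥ < ⊤`; for the theorem `T` has order type `κ + 1`.
Besides a point `base` common to all members of the domain there are two marks and a point
`link d g` for every `g < d`. The block of `b` consists of `base`, the mark of `b` when `b` is `⊥`
or `⊤`, and all links at `b`; its choice `core b` drops the links `link d b` going up from `b` and,
for `b = ⊤`, the point `base`. The remaining members, `hub = {base, topMark, botMark}` and the pairs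
`{base, p}`, are their own choice. Two distinct members share at most one point besides `base`;
this gives closure under intersections, (μPR) and (μCum).

Listing the blocks along `T` breaks (μCum κ) with `U = hub`: every link kept by a block points down
to an earlier block, but the last block drops `base`. For (μCumt α), a point outside `U` can only
pass from `μ (X β)` to earlier members, so it is eventually dropped by some block. If `X α` drops
`base`, it is `block ⊤`, so `U` contains `topMark` but, as `base ∈ μ U`, no link; then the links
kept by each block `b` force all blocks below `b` to occur earlier, so `α ≥ κ`. If `X α` drops an
upward link, `U` misses `botMark` and `link b ⊥`, which forces `block ⊥` into the family together
with its mark, which is never dropped.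
-/

/-- (μCum α). -/
def muCumOrd {Z : Type} (𝒴 : Set (Set Z)) (μ : Set Z → Set Z) (α : Ordinal.{0}) : Prop :=
  ∀ U ∈ 𝒴, ∀ X : Ordinal.{0} → Set Z,
    (∀ β ≤ α, X β ∈ 𝒴) →
    (∀ β ≤ α, μ (X β) ⊆ U ∪ ⋃ γ ∈ Set.Iio β, X γ) →
    (⋂ γ ∈ Set.Iic α, X γ) ∩ μ U ⊆ μ (X α)

/-- (μCumt α). -/
def muCumtOrd {Z : Type} (𝒴 : Set (Set Z)) (μ : Set Z → Set Z) (α : Ordinal.{0}) : Prop :=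
  ∀ U ∈ 𝒴, ∀ X : Ordinal.{0} → Set Z,
    (∀ β ≤ α, X β ∈ 𝒴) →
    (∀ β ≤ α, μ (X β) ⊆ U ∪ ⋃ γ ∈ Set.Iio β, X γ) →
    X α ∩ μ U ⊆ μ (X α)

namespace CumHierarchy

open Set Function

section Descent

variable {Z : Type*} {μ : Set Z → Set Z} {U : Set Z} {X : Ordinal → Set Z} {α : Ordinal}

theorem exists_mem_diff_of_cover (hcov : ∀ β ≤ α, μ (X β) ⊆ U ∪ ⋃ γ ∈ Iio β, X γ)
    {p : Z} (hp : p ∉ U) : ∀ β ≤ α, p ∈ X β → ∃ δ ≤ β, p ∈ X δ \ μ (X δ) := by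
  intro β
  induction β using WellFoundedLT.induction with
  | _ β ih =>
    intro hβ hpX
    by_cases hpμ : p ∈ μ (X β)
    · obtain hpU | hpγ := hcov β hβ hpμ
      · exact absurd hpU hp
      · obtain ⟨γ, hγ, hpγ⟩ := mem_iUnion₂.1 hpγ
        obtain ⟨δ, hδ, hpδ⟩ := ih γ hγ (hγ.le.trans hβ) hpγ
        exact ⟨δ, hδ.trans hγ.le, hpδ⟩
    · exact ⟨β, le_rfl, hpX, hpμ⟩

theorem notMem_of_cover (hcov : ∀ β ≤ α, μ (X β) ⊆ U ∪ ⋃ γ ∈ Iio β, X γ)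
    {p : Z} (hp : p ∉ U) (hkeep : ∀ β ≤ α, p ∈ X β → p ∈ μ (X β)) : ∀ β ≤ α, p ∉ X β :=
  fun β hβ hpX =>
    let ⟨δ, hδ, hpδ, hpμ⟩ := exists_mem_diff_of_cover hcov hp β hβ hpX
    hpμ (hkeep δ (hδ.trans hβ) hpδ)

end Descent

inductive Pt (T : Type*)
  | base
  | botMark
  | topMark
  | link (d g : T)

open Pt

section Pairs

variable {T : Type*} {p q r : Pt T} {C : Set (Pt T)}

def hub : Set (Pt T) := {base, topMark, botMark}

def pair (p : Pt T) : Set (Pt T) := {base, p}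

theorem not_subset_pair (hq : q ∈ C) (hr : r ∈ C) (hqb : q ≠ base) (hrb : r ≠ base)
    (hqr : q ≠ r) : ¬ C ⊆ pair p := by
  intro h
  have hqp := h hq
  have hrp := h hr
  simp_all [pair]

theorem exists_eq_pair_of_subset_pair (hC : base ∈ C) (h : C ⊆ pair p) : ∃ q, C = pair q := by
  by_cases hp : p ∈ C
  · exact ⟨p, h.antisymm (insert_subset hC (singleton_subset_iff.2 hp))⟩
  · refine ⟨base, subset_antisymm (fun q hq => ?_) (by simp [pair, hC])⟩
    rcases h hq with rfl | rfl
    · simp [pair]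
    · exact absurd hq hp

end Pairs

section Model

variable {T : Type*} [LinearOrder T] [BoundedOrder T]

def block (b : T) : Set (Pt T)
  | base => True
  | botMark => b = ⊥
  | topMark => b = ⊤
  | link d g => g < d ∧ (b = d ∨ b = g)

def core (b : T) : Set (Pt T)
  | base => b ≠ ⊤
  | botMark => b = ⊥
  | topMark => b = ⊤
  | link d g => g < d ∧ b = d

def domain : Set (Set (Pt T)) := insert hub (range pair ∪ range block)

noncomputable def mu : Set (Pt T) → Set (Pt T) := extend block core id

variable {b d g : T} {p : Pt T} {A B : Set (Pt T)}

@[simp] theorem base_mem_block : base ∈ block b := trivial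
@[simp] theorem botMark_mem_block : botMark ∈ block b ↔ b = ⊥ := Iff.rfl
@[simp] theorem topMark_mem_block : topMark ∈ block b ↔ b = ⊤ := Iff.rfl
@[simp] theorem link_mem_block : link d g ∈ block b ↔ g < d ∧ (b = d ∨ b = g) := Iff.rfl

@[simp] theorem base_mem_core : base ∈ core b ↔ b ≠ ⊤ := Iff.rfl
@[simp] theorem botMark_mem_core : botMark ∈ core b ↔ b = ⊥ := Iff.rfl
@[simp] theorem topMark_mem_core : topMark ∈ core b ↔ b = ⊤ := Iff.rfl
@[simp] theorem link_mem_core : link d g ∈ core b ↔ g < d ∧ b = d := Iff.rfl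

theorem core_subset_block : core b ⊆ block b := by
  rintro (_ | _ | _ | ⟨d, g⟩) <;> simp +contextual

theorem mem_block_diff_core :
    p ∈ block b \ core b ↔ (p = base ∧ b = ⊤) ∨ ∃ d, b < d ∧ p = link d b := by
  cases p with
  | link d g =>
    simp only [mem_sdiff, link_mem_block, link_mem_core, link.injEq]
    grind
  | _ => simp

theorem block_inter_block_subset (h : g < d) : block d ∩ block g ⊆ pair (link d g) := by
  rintro (_ | _ | _ | ⟨d', g'⟩) ⟨hd, hg⟩
  all_goals simp_all [pair]
  grind

theorem hub_mem_domain : hub ∈ (domain : Set (Set (Pt T))) := mem_insert _ _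

theorem pair_mem_domain : pair p ∈ domain := Or.inr (Or.inl ⟨p, rfl⟩)

theorem block_mem_domain : block b ∈ domain := Or.inr (Or.inr ⟨b, rfl⟩)

theorem base_mem_of_mem_domain (hA : A ∈ domain) : base ∈ A := by
  rcases hA with rfl | ⟨p, rfl⟩ | ⟨b, rfl⟩ <;> simp [hub, pair]

theorem eq_block_top_of_topMark_mem_of_link_mem (hA : A ∈ domain) (ht : topMark ∈ A)
    (hl : link d g ∈ A) : A = block ⊤ := by
  rcases hA with rfl | ⟨p, rfl⟩ | ⟨b, rfl⟩
  · simp [hub] at hl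
  · simp only [pair, mem_insert_iff, mem_singleton_iff, reduceCtorEq, false_or] at ht hl
    exact absurd (ht.trans hl.symm) (by simp)
  · rw [topMark_mem_block.1 ht]

theorem mu_of_notMem_range (hA : A ∉ range block) : mu A = A :=
  extend_apply' _ _ _ hA

section Nontrivial

variable [Nontrivial T]

theorem hub_not_subset_block : ¬ hub ⊆ block b := by
  intro h
  have htop : b = ⊤ := h (show topMark ∈ hub by simp [hub])
  have hbot : b = ⊥ := h (show botMark ∈ hub by simp [hub])
  exact bot_ne_top (hbot.symm.trans htop)

theorem block_not_subset_pair : ¬ block b ⊆ pair p := by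
  rcases eq_or_ne b ⊤ with rfl | htop
  · apply not_subset_pair (q := topMark) (r := link ⊤ ⊥) <;> simp
  have hb : b < ⊤ := lt_top_iff_ne_top.2 htop
  rcases eq_or_ne b ⊥ with rfl | hbot
  · apply not_subset_pair (q := botMark) (r := link ⊤ ⊥) <;> simp [hb]
  · apply not_subset_pair (q := link b ⊥) (r := link ⊤ b) <;>
      simp [bot_lt_iff_ne_bot.2 hbot, hb, htop]

theorem block_injective : Injective (block : T → Set (Pt T)) := by
  intro b b' h
  by_contra hne
  rcases lt_or_gt_of_ne hne with hlt | hlt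
  all_goals
    have hsub := block_inter_block_subset hlt
    rw [h, inter_self] at hsub
    exact block_not_subset_pair hsub

theorem mu_block : mu (block b) = core b :=
  block_injective.extend_apply _ _ b

theorem mu_hub : mu (hub : Set (Pt T)) = hub :=
  mu_of_notMem_range fun ⟨_, h⟩ => hub_not_subset_block h.ge

theorem mu_pair : mu (pair p) = pair p :=
  mu_of_notMem_range fun ⟨_, h⟩ => block_not_subset_pair h.le

theorem mu_subset (A : Set (Pt T)) : mu A ⊆ A := by
  by_cases hA : A ∈ range block
  · obtain ⟨b, rfl⟩ := hA
    rw [mu_block]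
    exact core_subset_block
  · rw [mu_of_notMem_range hA]

theorem hub_inter_block_subset :
    hub ∩ block b ⊆ pair (if b = ⊤ then topMark else botMark) := by
  rintro (_ | _ | _ | ⟨d, g⟩) ⟨hq, hqb⟩ <;> simp_all [hub, pair]

theorem exists_inter_subset_pair (hA : A ∈ domain) (hB : B ∈ domain) (hAB : A ≠ B) :
    ∃ p, A ∩ B ⊆ pair p := by
  rcases hA with rfl | ⟨p, rfl⟩ | ⟨b, rfl⟩
  · rcases hB with rfl | ⟨p, rfl⟩ | ⟨b, rfl⟩
    · exact absurd rfl hAB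
    · exact ⟨p, inter_subset_right⟩
    · exact ⟨_, hub_inter_block_subset⟩
  · exact ⟨p, inter_subset_left⟩
  · rcases hB with rfl | ⟨p, rfl⟩ | ⟨b', rfl⟩
    · exact ⟨_, inter_comm hub (block b) ▸ hub_inter_block_subset⟩
    · exact ⟨p, inter_subset_right⟩
    · have hne : b ≠ b' := fun h => hAB (h ▸ rfl)
      rcases lt_or_gt_of_ne hne with hlt | hlt
      · exact ⟨_, inter_comm (block b) _ ▸ block_inter_block_subset hlt⟩
      · exact ⟨_, block_inter_block_subset hlt⟩

theorem sInter_mem_domain {S : Set (Set (Pt T))} (hS : S ⊆ domain) (hne : S.Nonempty) :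
    ⋂₀ S ∈ domain := by
  obtain ⟨A, hA⟩ := hne
  by_cases h : ∀ B ∈ S, B = A
  · rw [(nonempty_of_mem hA).subset_singleton_iff.1 h, sInter_singleton]
    exact hS hA
  push Not at h
  obtain ⟨B, hB, hBA⟩ := h
  obtain ⟨p, hp⟩ := exists_inter_subset_pair (hS hB) (hS hA) hBA
  obtain ⟨q, hq⟩ := exists_eq_pair_of_subset_pair
    (mem_sInter.2 fun C hC => base_mem_of_mem_domain (hS hC)) (fun x hx => hp ⟨hx B hB, hx A hA⟩)
  exact hq ▸ pair_mem_domain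

theorem eq_block_of_block_subset (hA : A ∈ domain) (h : block b ⊆ A) : A = block b := by
  by_contra hne
  obtain ⟨p, hp⟩ := exists_inter_subset_pair hA block_mem_domain hne
  exact block_not_subset_pair fun q hq => hp ⟨h hq, hq⟩

theorem mu_inter_subset (hA : A ∈ domain) (hB : B ∈ domain) (hAB : A ⊆ B) :
    mu B ∩ A ⊆ mu A := by
  by_cases hAr : A ∈ range block
  · obtain ⟨b, rfl⟩ := hAr
    rw [eq_block_of_block_subset hB hAB]
    exact inter_subset_left
  · rw [mu_of_notMem_range hAr]
    exact inter_subset_right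

theorem core_eq_pair_of_subset (h : core b ⊆ pair p) : core b = pair p := by
  have htop : b ≠ ⊤ := by
    rintro rfl
    revert h
    apply not_subset_pair (q := topMark) (r := link ⊤ ⊥) <;> simp
  obtain ⟨q, hq, hqb⟩ : ∃ q ∈ core b, q ≠ base := by
    rcases eq_or_ne b ⊥ with rfl | hbot
    · exact ⟨botMark, by simp, by simp⟩
    · exact ⟨link b ⊥, by simp [bot_lt_iff_ne_bot.2 hbot], by simp⟩
  obtain rfl : q = p := (h hq).resolve_left hqb
  exact h.antisymm (insert_subset (by simpa) (singleton_subset_iff.2 hq))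

theorem mu_eq_of_mu_subset (hA : A ∈ domain) (hB : B ∈ domain) (h₁ : mu A ⊆ B) (h₂ : B ⊆ A) :
    mu A = mu B := by
  by_cases hAr : A ∈ range block
  · obtain ⟨b, rfl⟩ := hAr
    rcases hB with rfl | ⟨p, rfl⟩ | ⟨b', rfl⟩
    · exact absurd h₂ hub_not_subset_block
    · rw [mu_block, mu_pair] at *
      exact core_eq_pair_of_subset h₁
    · rw [eq_block_of_block_subset block_mem_domain h₂]
  · rw [mu_of_notMem_range hAr] at h₁
    rw [h₂.antisymm h₁]

theorem exists_eq_block_of_mem_diff_mu (hA : A ∈ domain) (hp : p ∈ A \ mu A) :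
    ∃ b, A = block b ∧ ((p = base ∧ b = ⊤) ∨ ∃ d, b < d ∧ p = link d b) := by
  by_cases hAr : A ∈ range block
  · obtain ⟨b, rfl⟩ := hAr
    rw [mu_block] at hp
    exact ⟨b, rfl, mem_block_diff_core.1 hp⟩
  · rw [mu_of_notMem_range hAr] at hp
    exact absurd hp.1 hp.2

theorem topMark_mem_mu (hA : A ∈ domain) (h : topMark ∈ A) : topMark ∈ mu A := by
  by_contra hμ
  obtain ⟨_, _, hlost⟩ := exists_eq_block_of_mem_diff_mu hA ⟨h, hμ⟩
  simp at hlost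

theorem botMark_mem_mu (hA : A ∈ domain) (h : botMark ∈ A) : botMark ∈ mu A := by
  by_contra hμ
  obtain ⟨_, _, hlost⟩ := exists_eq_block_of_mem_diff_mu hA ⟨h, hμ⟩
  simp at hlost

theorem eq_block_of_link_mem_diff_mu (hA : A ∈ domain) (h : link d g ∈ A \ mu A) :
    A = block g := by
  obtain ⟨b, rfl, hlost⟩ := exists_eq_block_of_mem_diff_mu hA h
  simp only [reduceCtorEq, false_and, link.injEq, false_or] at hlost
  obtain ⟨_, _, _, rfl⟩ := hlost
  rfl

theorem eq_pair_or_eq_block_of_link_mem_mu (hA : A ∈ domain) (h : link d g ∈ mu A) :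
    A = pair (link d g) ∨ A = block d := by
  rcases hA with rfl | ⟨p, rfl⟩ | ⟨b, rfl⟩
  · rw [mu_hub] at h
    simp [hub] at h
  · rw [mu_pair] at h
    simp only [pair, mem_insert_iff, mem_singleton_iff, reduceCtorEq, false_or] at h
    exact Or.inl (h ▸ rfl)
  · rw [mu_block, link_mem_core] at h
    exact Or.inr (h.2 ▸ rfl)

end Nontrivial

end Model

section Cover

variable {T : Type*} [LinearOrder T] [BoundedOrder T] [Nontrivial T]
  {U : Set (Pt T)} {X : Ordinal → Set (Pt T)} {α : Ordinal}

theorem exists_eq_block_bot_of_eq_block (hX : ∀ β ≤ α, X β ∈ domain)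
    (hcov : ∀ β ≤ α, mu (X β) ⊆ U ∪ ⋃ γ ∈ Iio β, X γ) {b : T} (hXα : X α = block b)
    (hU : link b ⊥ ∉ U) : ∃ δ ≤ α, X δ = block ⊥ := by
  rcases eq_or_ne b ⊥ with rfl | hb
  · exact ⟨α, le_rfl, hXα⟩
  have hlink : link b ⊥ ∈ mu (X α) := by
    rw [hXα, mu_block]
    exact ⟨bot_lt_iff_ne_bot.2 hb, rfl⟩
  obtain hU' | hγ := hcov α le_rfl hlink
  · exact absurd hU' hU
  obtain ⟨γ, hγα, hγ⟩ := mem_iUnion₂.1 hγ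
  obtain ⟨δ, hδγ, hδ⟩ := exists_mem_diff_of_cover hcov hU γ hγα.le hγ
  have hδα : δ ≤ α := hδγ.trans hγα.le
  exact ⟨δ, hδα, eq_block_of_link_mem_diff_mu (hX δ hδα) hδ⟩

end Cover

section WellOrder

open Ordinal

variable {T : Type} [LinearOrder T] [BoundedOrder T] [Nontrivial T] [WellFoundedLT T]
  {U : Set (Pt T)} {X : Ordinal.{0} → Set (Pt T)} {α : Ordinal.{0}}

theorem typein_le_of_eq_block (hX : ∀ β ≤ α, X β ∈ domain)
    (hcov : ∀ β ≤ α, mu (X β) ⊆ U ∪ ⋃ γ ∈ Iio β, X γ) (hU : ∀ d g, link d g ∉ U) (b : T) :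
    ∀ β ≤ α, X β = block b → typein (α := T) (· < ·) b ≤ β := by
  induction b using WellFoundedLT.induction with
  | _ b ih =>
    intro β hβ hXβ
    refine le_of_forall_lt fun o ho => ?_
    obtain ⟨g, rfl⟩ := typein_surj (· < ·) (ho.trans (typein_lt_type _ b))
    have hgb : g < b := (typein_lt_typein _).1 ho
    have hlink : link b g ∈ mu (X β) := by
      rw [hXβ, mu_block]
      exact ⟨hgb, rfl⟩
    obtain hU' | hγ := hcov β hβ hlink
    · exact absurd hU' (hU b g)
    obtain ⟨γ, hγβ, hγ⟩ := mem_iUnion₂.1 hγ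
    obtain ⟨δ, hδγ, hδ⟩ := exists_mem_diff_of_cover hcov (hU b g) γ (hγβ.le.trans hβ) hγ
    have hδα : δ ≤ α := hδγ.trans (hγβ.le.trans hβ)
    have hXδ := eq_block_of_link_mem_diff_mu (hX δ hδα) hδ
    exact (ih g hgb δ hδα hXδ).trans_lt (hδγ.trans_lt hγβ)

theorem muCumtOrd_of_lt_typein_top (hα : α < typein (α := T) (· < ·) ⊤) :
    muCumtOrd (domain (T := T)) mu α := by
  rintro U hU X hX hcov p ⟨hpX, hpμU⟩
  by_contra hp
  obtain ⟨b, hXα, hlost⟩ := exists_eq_block_of_mem_diff_mu (hX α le_rfl) ⟨hpX, hp⟩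
  rcases hlost with ⟨rfl, rfl⟩ | ⟨d, hbd, rfl⟩
  · have htop : topMark ∈ U := by
      by_contra htop
      exact notMem_of_cover hcov htop (fun β hβ => topMark_mem_mu (hX β hβ)) α le_rfl
        (hXα ▸ topMark_mem_block.2 rfl)
    have hlinks : ∀ d g, link d g ∉ U := fun d g hl => by
      rw [eq_block_top_of_topMark_mem_of_link_mem hU htop hl, mu_block] at hpμU
      exact hpμU rfl
    exact hα.not_ge (typein_le_of_eq_block hX hcov hlinks ⊤ α le_rfl hXα)
  · have hd : d ≠ ⊥ := (bot_le.trans_lt hbd).ne'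
    have hUbot : botMark ∉ U ∧ link b ⊥ ∉ U := by
      rcases eq_pair_or_eq_block_of_link_mem_mu hU hpμU with rfl | rfl
      · simp [pair, hbd.ne]
      · simp [hd, hbd.ne']
    obtain ⟨δ, hδα, hXδ⟩ := exists_eq_block_bot_of_eq_block hX hcov hXα hUbot.2
    exact notMem_of_cover hcov hUbot.1 (fun β hβ => botMark_mem_mu (hX β hβ)) δ hδα
      (hXδ ▸ botMark_mem_block.2 rfl)

theorem not_muCumOrd_typein_top : ¬ muCumOrd (domain (T := T)) mu (typein (α := T) (· < ·) ⊤) := by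
  set f := invFun (typein (α := T) (· < ·))
  have hf : ∀ g, f (typein (α := T) (· < ·) g) = g :=
    leftInverse_invFun (typein_injective _)
  have htypein : ∀ β ≤ typein (α := T) (· < ·) ⊤, typein (α := T) (· < ·) (f β) = β :=
    fun β hβ => invFun_eq (typein_surj _ (hβ.trans_lt (typein_lt_type _ _)))
  have hcov : ∀ β ≤ typein (α := T) (· < ·) ⊤,
      mu (block (f β)) ⊆ hub ∪ ⋃ γ ∈ Iio β, block (f γ) := by
    intro β hβ p hp
    rw [mu_block] at hp
    cases p with
    | link d g =>
      obtain ⟨hgd, rfl⟩ := hp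
      refine Or.inr (mem_iUnion₂.2 ⟨typein (α := T) (· < ·) g, ?_, ?_⟩)
      · rw [← htypein β hβ]
        exact (typein_lt_typein _).2 hgd
      · rw [hf]
        simp [hgd]
    | _ => exact Or.inl (by simp [hub])
  intro H
  have hbase := H hub hub_mem_domain (fun β => block (f β)) (fun _ _ => block_mem_domain) hcov
    ⟨mem_iInter₂.2 fun _ _ => base_mem_block, by rw [mu_hub]; simp [hub]⟩
  rw [hf, mu_block] at hbase
  exact hbase rfl

end WellOrder

end CumHierarchy

open CumHierarchy in
/-- For every ordinal κ > 0 there is an example, on a domain closed under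
arbitrary intersections, satisfying (μ⊆), (μPR), (μCum) and (μCumt α) for all
α < κ, in which (μCum κ) fails. -/
theorem muCum_hierarchy_strict :
    ∀ κ : Ordinal.{0}, 0 < κ →
      ∃ (Z : Type) (𝒴 : Set (Set Z)) (μ : Set Z → Set Z),
        (∀ S : Set (Set Z), S ⊆ 𝒴 → S.Nonempty → ⋂₀ S ∈ 𝒴) ∧
        (∀ X ∈ 𝒴, μ X ⊆ X) ∧
        (∀ X ∈ 𝒴, ∀ Y ∈ 𝒴, X ⊆ Y → μ Y ∩ X ⊆ μ X) ∧
        (∀ X ∈ 𝒴, ∀ Y ∈ 𝒴, μ X ⊆ Y → Y ⊆ X → μ X = μ Y) ∧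
        (∀ α < κ, muCumtOrd 𝒴 μ α) ∧
        ¬ muCumOrd 𝒴 μ κ := by
  intro κ hκ
  let T := (Order.succ κ).ToType
  let : BoundedOrder T := { WellFoundedLT.toOrderBot T, Ordinal.orderTopToTypeSucc κ with }
  have htop : Ordinal.typein (α := T) (· < ·) ⊤ = κ := Ordinal.typein_enum _ _
  have hlt := Ordinal.typein_lt_type (α := T) (· < ·) ⊤
  rw [htop] at hlt
  obtain ⟨g, hg⟩ := Ordinal.typein_surj (α := T) (· < ·) (hκ.trans hlt)
  have : Nontrivial T := nontrivial_of_lt g ⊤ ((Ordinal.typein_lt_typein _).1 (by rwa [hg, htop]))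
  refine ⟨Pt T, domain, mu, fun S hS hne => sInter_mem_domain hS hne, fun A _ => mu_subset A,
    fun A hA B hB => mu_inter_subset hA hB, fun A hA B hB => mu_eq_of_mu_subset hA hB,
    fun α hα => muCumtOrd_of_lt_typein_top (by rwa [htop]), ?_⟩
  simpa only [htop] using not_muCumOrd_typein_top (T := T)
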